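/- Conversely, if Ã(X,Y) solves the parabolic wave equation ∂²Ã/∂Y² + 2i ∂Ã/∂X = 0, then A(S,N) := exp(i(γNS² - γ²S⁵/10)) Ã(S, N - γS³/3) solves the Popov equation ∂²A/∂N² + 2i ∂A/∂S + 4γNSA = 0. -/

import Mathlib

/-!
Write `φ = γNS² - γ²S⁵/10` and `q = (S, N - γS³/3)`. Since the shift `N ↦ N - γS³/3` does not
depend on `N`, the chain rule gives `∂²A/∂N² = e^{iφ} (-γ²S⁴ Ã + 2iγS² ∂Ã/∂Y + ∂²Ã/∂Y²)(q)`, while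
along `S` the shifted point moves with velocity `(1, -γS²)`, so
`∂A/∂S = e^{iφ} (i(2γNS - γ²S⁴/2) Ã + ∂Ã/∂X - γS² ∂Ã/∂Y)(q)`. In
`∂²A/∂N² + 2i ∂A/∂S + 4γNS A` the `∂Ã/∂Y` terms cancel and so do the `Ã` terms, leaving
`e^{iφ} (∂²Ã/∂Y² + 2i ∂Ã/∂X)(q) = 0`.
-/

open Complex

noncomputable section

section PartialDerivatives

variable {F : Type*} [NormedAddCommGroup F] [NormedSpace ℝ F]

def partialFst (f : ℝ × ℝ → F) (p : ℝ × ℝ) : F := fderiv ℝ f p (1, 0)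

def partialSnd (f : ℝ × ℝ → F) (p : ℝ × ℝ) : F := fderiv ℝ f p (0, 1)

variable {f : ℝ × ℝ → F}

theorem hasDerivAt_comp_prodMk {a b : ℝ → ℝ} {a' b' t : ℝ}
    (hf : DifferentiableAt ℝ f (a t, b t)) (ha : HasDerivAt a a' t) (hb : HasDerivAt b b' t) :
    HasDerivAt (fun t => f (a t, b t))
      (a' • partialFst f (a t, b t) + b' • partialSnd f (a t, b t)) t := by
  have hv : ((a', b') : ℝ × ℝ) = a' • (1, 0) + b' • (0, 1) := by simp
  have h := hf.hasFDerivAt.comp_hasDerivAt t (ha.prodMk hb)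
  rwa [hv, map_add, map_smul, map_smul] at h

theorem hasDerivAt_partialFst {x y : ℝ} (hf : DifferentiableAt ℝ f (x, y)) :
    HasDerivAt (fun x => f (x, y)) (partialFst f (x, y)) x := by
  simpa using hasDerivAt_comp_prodMk hf (hasDerivAt_id x) (hasDerivAt_const x y)

theorem hasDerivAt_partialSnd {x y : ℝ} (hf : DifferentiableAt ℝ f (x, y)) :
    HasDerivAt (fun y => f (x, y)) (partialSnd f (x, y)) y := by
  simpa using hasDerivAt_comp_prodMk hf (hasDerivAt_const y x) (hasDerivAt_id y)

theorem ContDiff.partialSnd {n : WithTop ℕ∞} (hf : ContDiff ℝ (n + 1) f) :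
    ContDiff ℝ n (partialSnd f) :=
  (hf.fderiv_right le_rfl).clm_apply contDiff_const

end PartialDerivatives

section Popov

def popovPhase (γ S N : ℝ) : ℂ := I * (γ * N * S ^ 2 - γ ^ 2 * S ^ 5 / 10)

def popovTransform (γ : ℝ) (f : ℝ × ℝ → ℂ) (S N : ℝ) : ℂ :=
  exp (popovPhase γ S N) * f (S, N - γ * S ^ 3 / 3)

variable {γ : ℝ} {f : ℝ × ℝ → ℂ}

theorem hasDerivAt_popovPhase_snd (S N : ℝ) :
    HasDerivAt (popovPhase γ S) (I * γ * S ^ 2) N := by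
  have h : HasDerivAt (fun n : ℝ => γ * n * S ^ 2 - γ ^ 2 * S ^ 5 / 10) (γ * S ^ 2) N := by
    simpa using (((hasDerivAt_id N).const_mul γ).mul_const (S ^ 2)).sub_const (γ ^ 2 * S ^ 5 / 10)
  have e : popovPhase γ S = fun n => I * ((γ * n * S ^ 2 - γ ^ 2 * S ^ 5 / 10 : ℝ) : ℂ) := by
    ext n; push_cast; rfl
  rw [e]
  exact (h.ofReal_comp.const_mul I).congr_deriv (by push_cast; ring)

theorem hasDerivAt_popovPhase_fst (S N : ℝ) :
    HasDerivAt (fun s => popovPhase γ s N) (I * (2 * γ * N * S - γ ^ 2 * S ^ 4 / 2)) S := by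
  have h : HasDerivAt (fun s : ℝ => γ * N * s ^ 2 - γ ^ 2 * s ^ 5 / 10)
      (2 * γ * N * S - γ ^ 2 * S ^ 4 / 2) S := by
    refine (((hasDerivAt_pow 2 S).const_mul (γ * N)).sub
      (((hasDerivAt_pow 5 S).const_mul (γ ^ 2)).div_const 10)).congr_deriv ?_
    norm_num
    ring
  have e : (fun s => popovPhase γ s N) =
      fun s => I * ((γ * N * s ^ 2 - γ ^ 2 * s ^ 5 / 10 : ℝ) : ℂ) := by
    ext s; push_cast; rfl
  rw [e]
  exact (h.ofReal_comp.const_mul I).congr_deriv (by push_cast; ring)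

theorem hasDerivAt_exp_popovPhase_mul_shift {g : ℝ × ℝ → ℂ} {S n : ℝ} (c : ℝ)
    (hg : DifferentiableAt ℝ g (S, n - c)) :
    HasDerivAt (fun n => exp (popovPhase γ S n) * g (S, n - c))
      (exp (popovPhase γ S n) * (I * γ * S ^ 2 * g (S, n - c) + partialSnd g (S, n - c))) n := by
  have hshift := hasDerivAt_comp_prodMk hg (hasDerivAt_const n S) ((hasDerivAt_id n).sub_const c)
  refine ((hasDerivAt_popovPhase_snd (γ := γ) S n).cexp.mul hshift).congr_deriv ?_
  simp only [id, zero_smul, one_smul, zero_add]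
  ring

theorem hasDerivAt_popovTransform_snd (hf : Differentiable ℝ f) (S n : ℝ) :
    HasDerivAt (popovTransform γ f S)
      (exp (popovPhase γ S n) * (I * γ * S ^ 2 * f (S, n - γ * S ^ 3 / 3)
        + partialSnd f (S, n - γ * S ^ 3 / 3))) n :=
  hasDerivAt_exp_popovPhase_mul_shift _ (hf _)

theorem hasDerivAt_deriv_popovTransform_snd (hf : ContDiff ℝ 2 f) (S N : ℝ) :
    HasDerivAt (deriv (popovTransform γ f S))
      (exp (popovPhase γ S N) * ((I * γ * S ^ 2) ^ 2 * f (S, N - γ * S ^ 3 / 3)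
        + 2 * (I * γ * S ^ 2) * partialSnd f (S, N - γ * S ^ 3 / 3)
        + partialSnd (partialSnd f) (S, N - γ * S ^ 3 / 3))) N := by
  have hf1 : Differentiable ℝ f := hf.differentiable two_ne_zero
  have hf2 : Differentiable ℝ (partialSnd f) :=
    (ContDiff.partialSnd (n := 1) hf).differentiable one_ne_zero
  have hderiv : deriv (popovTransform γ f S) = fun n =>
      I * γ * S ^ 2 * (exp (popovPhase γ S n) * f (S, n - γ * S ^ 3 / 3))
        + exp (popovPhase γ S n) * partialSnd f (S, n - γ * S ^ 3 / 3) := by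
    ext n
    rw [(hasDerivAt_popovTransform_snd hf1 S n).deriv]
    ring
  rw [hderiv]
  refine (((hasDerivAt_exp_popovPhase_mul_shift _ (hf1 _)).const_mul (I * γ * S ^ 2)).add
    (hasDerivAt_exp_popovPhase_mul_shift _ (hf2 _))).congr_deriv ?_
  ring

theorem hasDerivAt_popovTransform_fst (hf : Differentiable ℝ f) (S N : ℝ) :
    HasDerivAt (fun s => popovTransform γ f s N)
      (exp (popovPhase γ S N) * (I * (2 * γ * N * S - γ ^ 2 * S ^ 4 / 2) * f (S, N - γ * S ^ 3 / 3)
        + partialFst f (S, N - γ * S ^ 3 / 3)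
        - γ * S ^ 2 * partialSnd f (S, N - γ * S ^ 3 / 3))) S := by
  have hcurve : HasDerivAt (fun s => N - γ * s ^ 3 / 3) (-(γ * S ^ 2)) S := by
    refine ((hasDerivAt_const S N).sub
      (((hasDerivAt_pow 3 S).const_mul γ).div_const 3)).congr_deriv ?_
    norm_num
    ring
  have hgraph := hasDerivAt_comp_prodMk (hf _) (hasDerivAt_id S) hcurve
  refine ((hasDerivAt_popovPhase_fst (γ := γ) S N).cexp.mul hgraph).congr_deriv ?_
  simp only [id, one_smul, neg_smul, real_smul]
  push_cast
  ring

theorem popov_of_parabolic (hf : ContDiff ℝ 2 f)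
    (hparabolic : ∀ p, partialSnd (partialSnd f) p + 2 * I * partialFst f p = 0) (S N : ℝ) :
    deriv (fun n => deriv (popovTransform γ f S) n) N
      + 2 * I * deriv (fun s => popovTransform γ f s N) S
      + 4 * γ * N * S * popovTransform γ f S N = 0 := by
  have hf1 : Differentiable ℝ f := hf.differentiable two_ne_zero
  rw [(hasDerivAt_deriv_popovTransform_snd hf S N).deriv,
    (hasDerivAt_popovTransform_fst hf1 S N).deriv, popovTransform]
  linear_combination exp (popovPhase γ S N) * hparabolic (S, N - γ * S ^ 3 / 3)
    + 4 * γ * N * S * exp (popovPhase γ S N) * f (S, N - γ * S ^ 3 / 3) * I_sq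

end Popov

end

theorem parabolic_to_popov_general (γ : ℝ)
    (Atil : ℝ → ℝ → ℂ)
    (hAtil : ContDiff ℝ 2 (fun p : ℝ × ℝ => Atil p.1 p.2))
    (hPWE : ∀ X Y : ℝ,
      deriv (fun y => deriv (fun y' => Atil X y') y) Y
        + 2 * I * deriv (fun x => Atil x Y) X = 0)
    (A : ℝ → ℝ → ℂ)
    (hdef : ∀ S N : ℝ,
      A S N = Complex.exp (I * ((γ : ℂ) * N * S ^ 2 - (γ : ℂ) ^ 2 * S ^ 5 / 10))
        * Atil S (N - γ * S ^ 3 / 3)) :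
    ∀ S N : ℝ,
      deriv (fun n => deriv (fun n' => A S n') n) N
        + 2 * I * deriv (fun s => A s N) S
        + 4 * (γ : ℂ) * (N : ℂ) * (S : ℂ) * A S N = 0 := by
  set f : ℝ × ℝ → ℂ := fun p => Atil p.1 p.2
  obtain rfl : A = popovTransform γ f := funext fun S => funext fun N => hdef S N
  have hf1 : Differentiable ℝ f := hAtil.differentiable two_ne_zero
  have hf2 : Differentiable ℝ (partialSnd f) :=
    (ContDiff.partialSnd (n := 1) hAtil).differentiable one_ne_zero
  refine popov_of_parabolic hAtil fun ⟨X, Y⟩ => ?_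
  have hfY : (fun y => deriv (fun y' => Atil X y') y) = fun y => partialSnd f (X, y) :=
    funext fun y => (hasDerivAt_partialSnd (hf1 (X, y))).deriv
  rw [← (hasDerivAt_partialSnd (hf2 (X, Y))).deriv, ← hfY,
    ← (hasDerivAt_partialFst (hf1 (X, Y))).deriv]
  exact hPWE X Y

/-- If `Ã` solves the parabolic wave equation `∂²Ã/∂Y² + 2i ∂Ã/∂X = 0`,
then `A(S,N) := exp(i(γNS² - γ²S⁵/10)) Ã(S, N - γS³/3)` solves the Popov equation
`∂²A/∂N² + 2i ∂A/∂S + 4γNS A = 0`. -/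
theorem parabolic_to_popov (γ : ℝ) (hγ : 0 < γ)
    (Atil : ℝ → ℝ → ℂ)
    (hAtil : ContDiff ℝ 2 (fun p : ℝ × ℝ => Atil p.1 p.2))
    (hPWE : ∀ X Y : ℝ,
      deriv (fun y => deriv (fun y' => Atil X y') y) Y
        + 2 * I * deriv (fun x => Atil x Y) X = 0)
    (A : ℝ → ℝ → ℂ)
    (hdef : ∀ S N : ℝ,
      A S N = Complex.exp (I * ((γ : ℂ) * N * S ^ 2 - (γ : ℂ) ^ 2 * S ^ 5 / 10))
        * Atil S (N - γ * S ^ 3 / 3)) :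
    ∀ S N : ℝ,
      deriv (fun n => deriv (fun n' => A S n') n) N
        + 2 * I * deriv (fun s => A s N) S
        + 4 * (γ : ℂ) * (N : ℂ) * (S : ℂ) * A S N = 0 :=
  parabolic_to_popov_general γ Atil hAtil hPWE A hdef
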